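/- Baby maser, non-existence of invariant state for λ ≥ 1/2: let αₙ = 0, βₙ = 1 for n ≥ 1 and let ψ be any state on M₂ with parameter λ ≥ 1/2. If φ is a normal state with φ ∘ T_ψ = φ, then the sequence cₙ := φ(pₙ) satisfies cₙ = λ cₙ₋₁ + (1−λ) cₙ₊₁ for all n ≥ 1; together with Σ cₙ = 1 and cₙ ≥ 0 this is impossible. Hence T_ψ has no invariant normal state for λ ≥ 1/2. -/

import Mathlib

/-!
Testing an invariant normal state `x ↦ ∑ₖ ⟪ξₖ, x ξₖ⟫` against the coordinate projection
`p_{m+1}` shows that its diagonal `cₙ = ∑ₖ |ξₖ(n)|²` obeys `λ cₘ + (1 - λ) c_{m+2} = c_{m+1}`: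
the Kraus operators move coordinate `m + 1` to coordinates `m` and `m + 2`, and their weights
combine as `λ |μ|² + (1 - λ)(1 - |ζ|²) = 1 - λ` with `μ = iζ√((1 - λ)/λ)`. The increments of
`c` are then multiplied by `λ / (1 - λ)`, which has absolute value `≥ 1` when `λ ≥ 1/2`, so
their absolute values never decrease; but `∑ cₙ = 1` forces `cₙ → 0`, so the increments vanish,
`c` is constant and hence zero, contradicting `∑ cₙ = 1`.
-/

noncomputable section
open ContinuousLinearMap

abbrev H : Type := lp (fun _ : ℕ => ℂ) 2

def e (n : ℕ) : H := lp.single 2 n 1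

open Filter Topology

theorem eq_zero_of_monotone_abs_of_tendsto_zero {d : ℕ → ℝ} (hmono : Monotone fun n => |d n|)
    (hd : Tendsto d atTop (𝓝 0)) (n : ℕ) : d n = 0 :=
  abs_nonpos_iff.1 <| hmono.ge_of_tendsto (by simpa using hd.abs) n

theorem monotone_abs_sub_of_recurrence {l : ℝ} (hl : 1 / 2 ≤ l) {c : ℕ → ℝ}
    (hrec : ∀ m, l * c m + (1 - l) * c (m + 2) = c (m + 1)) :
    Monotone fun m => |c (m + 1) - c m| := by
  refine monotone_nat_of_le_succ fun m => ?_
  have hl0 : 0 < l := by linarith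
  have hinc : l * |c (m + 1) - c m| = |1 - l| * |c (m + 2) - c (m + 1)| := by
    rw [← abs_of_pos hl0, ← abs_mul, ← abs_mul, abs_of_pos hl0]
    congr 1
    linear_combination -hrec m
  have hratio : |1 - l| ≤ l := abs_le.2 ⟨by linarith, by linarith⟩
  refine le_of_mul_le_mul_left ?_ hl0
  rw [hinc]
  exact mul_le_mul_of_nonneg_right hratio (abs_nonneg _)

theorem eq_zero_of_recurrence_of_tendsto_zero {l : ℝ} (hl : 1 / 2 ≤ l) {c : ℕ → ℝ}
    (hrec : ∀ m, l * c m + (1 - l) * c (m + 2) = c (m + 1))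
    (hc : Tendsto c atTop (𝓝 0)) : c = 0 := by
  have hinc : ∀ m, c (m + 1) - c m = 0 :=
    eq_zero_of_monotone_abs_of_tendsto_zero (monotone_abs_sub_of_recurrence hl hrec)
      (by simpa using ((tendsto_add_atTop_iff_nat 1).2 hc).sub hc)
  have hconst : ∀ n, c n = c 0 := by
    intro n
    induction n with
    | zero => rfl
    | succ n ih => linarith [hinc n]
  have hc0 : c 0 = 0 :=
    tendsto_nhds_unique (tendsto_const_nhds.congr fun n => (hconst n).symm) hc
  funext n
  rw [hconst n, hc0, Pi.zero_apply]

theorem hasSum_tsum_swap_of_nonneg {β γ : Type*} {f : β → γ → ℝ} (hf : ∀ b c, 0 ≤ f b c)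
    {a : β → ℝ} {s : ℝ} (hrow : ∀ b, HasSum (f b) (a b)) (ha : HasSum a s) :
    HasSum (fun c => ∑' b, f b c) s := by
  have hF : Summable (Function.uncurry f) :=
    (summable_prod_of_nonneg fun p => hf p.1 p.2).2
      ⟨fun b => (hrow b).summable, by simpa only [(hrow _).tsum_eq] using ha.summable⟩
  have hFs : HasSum (Function.uncurry f) s := by
    rw [← (hF.hasSum.prod_fiberwise hrow).unique ha]
    exact hF.hasSum
  have hswap := (Equiv.prodComm γ β).hasSum_iff.2 hFs
  exact hswap.prod_fiberwise fun c => (hswap.summable.prod_factor c).hasSum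

theorem inner_e_left (v : H) (n : ℕ) : inner ℂ (e n) v = v n := by
  simp [e, lp.inner_single_left]

theorem adjoint_apply_apply (T : H →L[ℂ] H) (v : H) (n : ℕ) :
    adjoint T v n = inner ℂ (T (e n)) v := by
  rw [← inner_e_left, adjoint_inner_right]

theorem apply_apply_eq_inner_adjoint (T : H →L[ℂ] H) (v : H) (n : ℕ) :
    T v n = inner ℂ (adjoint T (e n)) v := by
  rw [← inner_e_left, adjoint_inner_left]

theorem hasSum_norm_apply_sq (v : H) : HasSum (fun n => ‖v n‖ ^ 2) (‖v‖ ^ 2) := by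
  simpa using lp.hasSum_norm (p := 2) (by norm_num) v

def coordProj (n : ℕ) : H →L[ℂ] H := (innerSL ℂ (e n)).smulRight (e n)

theorem inner_coordProj_self (n : ℕ) (v : H) :
    inner ℂ v (coordProj n v) = ((‖v n‖ ^ 2 : ℝ) : ℂ) := by
  rw [coordProj, smulRight_apply, innerSL_apply_apply, inner_e_left, inner_smul_right,
    ← inner_conj_symm, inner_e_left, Complex.mul_conj', Complex.ofReal_pow]

theorem inner_adjoint_comp_coordProj_comp (t : H →L[ℂ] H) (n : ℕ) (v : H) :
    inner ℂ v ((adjoint t ∘L coordProj n ∘L t) v) = ((‖t v n‖ ^ 2 : ℝ) : ℂ) := by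
  rw [comp_apply, comp_apply, adjoint_inner_right, inner_coordProj_self]

section Shift

variable {s p₀ : H →L[ℂ] H}

theorem adjoint_shift_apply (hs : ∀ n, s (e n) = e (n + 1)) (v : H) (n : ℕ) :
    adjoint s v n = v (n + 1) := by
  rw [adjoint_apply_apply, hs, inner_e_left]

theorem shift_apply_succ (hs : ∀ n, s (e n) = e (n + 1)) (v : H) (n : ℕ) :
    s v (n + 1) = v n := by
  have hs' : adjoint s (e (n + 1)) = e n := by
    ext m
    simp only [adjoint_shift_apply hs, e, lp.single_apply, Pi.single_apply, add_left_inj]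
  rw [apply_apply_eq_inner_adjoint, hs', inner_e_left]

theorem vacuumProj_apply_succ (hp₀0 : p₀ (e 0) = e 0) (hp₀ : ∀ n, 1 ≤ n → p₀ (e n) = 0)
    (v : H) (n : ℕ) : p₀ v (n + 1) = 0 := by
  have hp₀' : adjoint p₀ (e (n + 1)) = 0 := by
    ext m
    rw [adjoint_apply_apply]
    rcases m with _ | m
    · rw [hp₀0, inner_e_left, e, lp.single_apply_ne _ _ _ (by omega)]
      rfl
    · rw [hp₀ (m + 1) (by omega), inner_zero_left]
      rfl
  rw [apply_apply_eq_inner_adjoint, hp₀', inner_zero_left]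

end Shift

def krausMap (a b : ℝ) (t₁ t₂ t₃ t₄ x : H →L[ℂ] H) : H →L[ℂ] H :=
  (a : ℂ) • (adjoint t₁ ∘L x ∘L t₁ + adjoint t₂ ∘L x ∘L t₂) +
    (b : ℂ) • (adjoint t₃ ∘L x ∘L t₃ + adjoint t₄ ∘L x ∘L t₄)

theorem inner_krausMap_coordProj (a b : ℝ) (t₁ t₂ t₃ t₄ : H →L[ℂ] H) (n : ℕ) (v : H) :
    inner ℂ v (krausMap a b t₁ t₂ t₃ t₄ (coordProj n) v) =
      ((a * (‖t₁ v n‖ ^ 2 + ‖t₂ v n‖ ^ 2) + b * (‖t₃ v n‖ ^ 2 + ‖t₄ v n‖ ^ 2) : ℝ) : ℂ) := by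
  simp only [krausMap, add_apply, smul_apply, inner_add_right, inner_smul_right,
    inner_adjoint_comp_coordProj_comp]
  push_cast
  ring

theorem inner_krausMap_coordProj_succ {s p₀ : H →L[ℂ] H} (hs : ∀ n, s (e n) = e (n + 1))
    (hp₀0 : p₀ (e 0) = e 0) (hp₀ : ∀ n, 1 ≤ n → p₀ (e n) = 0) (a b : ℝ) (μ : ℂ) (m : ℕ)
    (v : H) :
    inner ℂ v (krausMap a b (μ • adjoint s) (s - μ • p₀) (adjoint s) p₀ (coordProj (m + 1)) v) =
      ((a * ‖v m‖ ^ 2 + (a * ‖μ‖ ^ 2 + b) * ‖v (m + 2)‖ ^ 2 : ℝ) : ℂ) := by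
  rw [inner_krausMap_coordProj]
  simp only [smul_apply, sub_apply, lp.coeFn_smul, lp.coeFn_sub, Pi.smul_apply, Pi.sub_apply,
    smul_eq_mul, adjoint_shift_apply hs, shift_apply_succ hs,
    vacuumProj_apply_succ hp₀0 hp₀, mul_zero, sub_zero, norm_zero, norm_mul]
  congr 1
  ring

section Diagonal

variable {ξ : ℕ → H}

def diag (ξ : ℕ → H) (n : ℕ) : ℝ := ∑' k, ‖ξ k n‖ ^ 2

theorem summable_norm_apply_sq (hξ : Summable fun k => ‖ξ k‖ ^ 2) (n : ℕ) :
    Summable fun k => ‖ξ k n‖ ^ 2 :=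
  hξ.of_nonneg_of_le (fun _ => by positivity) fun k =>
    pow_le_pow_left₀ (norm_nonneg _) (lp.norm_apply_le_norm two_ne_zero (ξ k) n) 2

theorem hasSum_diag {r : ℝ} (hξ : HasSum (fun k => ‖ξ k‖ ^ 2) r) : HasSum (diag ξ) r :=
  hasSum_tsum_swap_of_nonneg (fun _ _ => by positivity) (fun k => hasSum_norm_apply_sq (ξ k)) hξ

theorem diag_eq_of_tsum_inner_eq (hξ : Summable fun k => ‖ξ k‖ ^ 2) {a b : ℝ} {n m₁ m₂ : ℕ}
    {y : H →L[ℂ] H} (hy : ∀ v, inner ℂ v (y v) = ((a * ‖v m₁‖ ^ 2 + b * ‖v m₂‖ ^ 2 : ℝ) : ℂ))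
    (hinv : ∑' k, inner ℂ (ξ k) (y (ξ k)) = ∑' k, inner ℂ (ξ k) (coordProj n (ξ k))) :
    a * diag ξ m₁ + b * diag ξ m₂ = diag ξ n := by
  simp only [hy, inner_coordProj_self] at hinv
  rw [← Complex.ofReal_tsum, ← Complex.ofReal_tsum, Complex.ofReal_inj,
    ((summable_norm_apply_sq hξ m₁).mul_left a).tsum_add
      ((summable_norm_apply_sq hξ m₂).mul_left b), tsum_mul_left, tsum_mul_left] at hinv
  exact hinv

end Diagonal

theorem mul_norm_I_mul_sqrt_sq_add {l : ℝ} (hl0 : 0 < l) (hl1 : l ≤ 1) (ζ : ℂ) :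
    l * ‖Complex.I * ζ * ((Real.sqrt ((1 - l) / l) : ℝ) : ℂ)‖ ^ 2 + (1 - l) * (1 - ‖ζ‖ ^ 2)
      = 1 - l := by
  have hratio : 0 ≤ (1 - l) / l := div_nonneg (by linarith) hl0.le
  rw [norm_mul, norm_mul, Complex.norm_I, one_mul, mul_pow, Complex.norm_real,
    Real.norm_of_nonneg (Real.sqrt_nonneg _), Real.sq_sqrt hratio]
  field_simp
  ring

theorem babymaser_no_invariant_state_general
    (l : ℝ) (hl0 : 1 / 2 ≤ l) (hl1 : l ≤ 1) (ζ : ℂ)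
    (s p₀ : H →L[ℂ] H)
    (hs : ∀ n, s (e n) = e (n + 1))
    (hp₀0 : p₀ (e 0) = e 0) (hp₀ : ∀ n, 1 ≤ n → p₀ (e n) = 0)
    (t₁ t₂ t₃ t₄ : H →L[ℂ] H)
    (ht₁ : t₁ = (Complex.I * ζ * ((Real.sqrt ((1 - l) / l) : ℝ) : ℂ)) • adjoint s)
    (ht₂ : t₂ = s - (Complex.I * ζ * ((Real.sqrt ((1 - l) / l) : ℝ) : ℂ)) • p₀)
    (ht₃ : t₃ = adjoint s) (ht₄ : t₄ = p₀) :
    ¬ ∃ ξ : ℕ → H, (∑' n, ‖ξ n‖ ^ 2) = 1 ∧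
      ∀ x : H →L[ℂ] H,
        (∑' n, (inner ℂ (ξ n)
          ((((l : ℂ) • (adjoint t₁ ∘L x ∘L t₁ + adjoint t₂ ∘L x ∘L t₂)
            + (((1 - l) * (1 - ‖ζ‖ ^ 2) : ℝ) : ℂ) •
                (adjoint t₃ ∘L x ∘L t₃ + adjoint t₄ ∘L x ∘L t₄))) (ξ n)) : ℂ))
        = ∑' n, (inner ℂ (ξ n) (x (ξ n)) : ℂ) := by
  rintro ⟨ξ, hξ, hinv⟩
  subst t₁ t₂ t₃ t₄
  have hξs : HasSum (fun k => ‖ξ k‖ ^ 2) 1 := by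
    have hsum : Summable fun k => ‖ξ k‖ ^ 2 := by
      by_contra h
      simp [tsum_eq_zero_of_not_summable h] at hξ
    exact hξ ▸ hsum.hasSum
  -- `hinv x` is the invariance for `krausMap l ((1 - l) * (1 - ‖ζ‖ ^ 2)) t₁ t₂ t₃ t₄ x`, unfolded
  have hrec : ∀ m, l * diag ξ m + (1 - l) * diag ξ (m + 2) = diag ξ (m + 1) := fun m =>
    diag_eq_of_tsum_inner_eq hξs.summable (y := krausMap l _ _ _ _ _ (coordProj (m + 1)))
      (fun v => by
        rw [inner_krausMap_coordProj_succ hs hp₀0 hp₀,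
          mul_norm_I_mul_sqrt_sq_add (by linarith) hl1])
      (hinv (coordProj (m + 1)))
  have hdiag := hasSum_diag hξs
  rw [eq_zero_of_recurrence_of_tendsto_zero hl0 hrec hdiag.summable.tendsto_atTop_zero] at hdiag
  exact zero_ne_one (hasSum_zero.unique hdiag)

/-- baby maser (αₙ = 0, βₙ = 1 for n ≥ 1).  For any state ψ with
parameter λ ≥ 1/2 the transition operator
T_ψ(x) = λ(t₁* x t₁ + t₂* x t₂) + (1−λ)(1−|ζ|²)(t₃* x t₃ + t₄* x t₄), with
t₁ = iζ√((1−λ)/λ) s*, t₂ = s − iζ√((1−λ)/λ) p₀, t₃ = s*, t₄ = p₀, admits no invariant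
normal state (normal states being represented as x ↦ Σₙ ⟨ξₙ, x ξₙ⟩ with Σ‖ξₙ‖² = 1). -/
theorem babymaser_no_invariant_state
    (l : ℝ) (hl0 : 1 / 2 ≤ l) (hl1 : l ≤ 1) (ζ : ℂ) (hζ : ‖ζ‖ ≤ 1)
    (s p₀ : H →L[ℂ] H)
    (hs : ∀ n, s (e n) = e (n + 1))
    (hp₀0 : p₀ (e 0) = e 0) (hp₀ : ∀ n, 1 ≤ n → p₀ (e n) = 0)
    (t₁ t₂ t₃ t₄ : H →L[ℂ] H)
    (ht₁ : t₁ = (Complex.I * ζ * ((Real.sqrt ((1 - l) / l) : ℝ) : ℂ)) • adjoint s)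
    (ht₂ : t₂ = s - (Complex.I * ζ * ((Real.sqrt ((1 - l) / l) : ℝ) : ℂ)) • p₀)
    (ht₃ : t₃ = adjoint s) (ht₄ : t₄ = p₀) :
    ¬ ∃ ξ : ℕ → H, (∑' n, ‖ξ n‖ ^ 2) = 1 ∧
      ∀ x : H →L[ℂ] H,
        (∑' n, (inner ℂ (ξ n)
          ((((l : ℂ) • (adjoint t₁ ∘L x ∘L t₁ + adjoint t₂ ∘L x ∘L t₂)
            + (((1 - l) * (1 - ‖ζ‖ ^ 2) : ℝ) : ℂ) •
                (adjoint t₃ ∘L x ∘L t₃ + adjoint t₄ ∘L x ∘L t₄))) (ξ n)) : ℂ))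
        = ∑' n, (inner ℂ (ξ n) (x (ξ n)) : ℂ) :=
  babymaser_no_invariant_state_general l hl0 hl1 ζ s p₀ hs hp₀0 hp₀ t₁ t₂ t₃ t₄ ht₁ ht₂ ht₃ ht₄
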